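/- arXiv:2101.02968 — 3 statements merged into one kernel-verified Lean document; each statement's English description precedes it below -/
import Mathlib

section
/- For binary random variables Y, R, A such that P(R = r, A = a) > 0 for every pair (r, a), sufficiency (Y conditionally independent of A given R) holds if and only if both groups have the same positive predictive value, P(Y = + | R = +, A = p) = P(Y = + | R = +, A = q), and the same negative predictive value, P(Y = − | R = −, A = p) = P(Y = − | R = −, A = q). -/
/-!
Where `P(R = r) > 0`, the product rule `P(Y, A | R = r) = P(Y | R = r) · P(A | R = r)` says
`P(Y = y | R = r, A = a) = P(Y = y | R = r)`. As `P(Y = y | R = r)` is a mixture of the two group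
values `P(Y = y | R = r, A = a)` with positive weights, this holds for both groups exactly when the
groups agree. Since `Y` is binary, agreement for `Y = y` is equivalent to agreement for its
complement, so it suffices to take `y = r`: the positive and negative predictive values.
-/

open MeasureTheory ENNReal

/-- Conditional probability `P(s | t) = μ(s ∩ t) / μ t`. -/
noncomputable def condProb {Ω : Type*} [MeasurableSpace Ω] (μ : Measure Ω)
    (s t : Set Ω) : ℝ≥0∞ := μ (s ∩ t) / μ t

/-- Discrete conditional independence of `X` and `Y` given `Z`:
`P(X = x, Y = y | Z = z) = P(X = x | Z = z) · P(Y = y | Z = z)` whenever `P(Z = z) > 0`. -/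
def CondIndepDiscrete {Ω α β γ : Type*} [MeasurableSpace Ω] (μ : Measure Ω)
    (X : Ω → α) (Y : Ω → β) (Z : Ω → γ) : Prop :=
  ∀ (x : α) (y : β) (z : γ), μ {ω | Z ω = z} ≠ 0 →
    condProb μ {ω | X ω = x ∧ Y ω = y} {ω | Z ω = z} =
      condProb μ {ω | X ω = x} {ω | Z ω = z} * condProb μ {ω | Y ω = y} {ω | Z ω = z}

namespace ENNReal

theorem div_eq_add_div_add_iff {a b x z : ℝ≥0∞} (ha : a ≠ ∞) (hx₀ : x ≠ 0) (hx : x ≠ ∞)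
    (hz₀ : z ≠ 0) (hz : z ≠ ∞) : a / x = (a + b) / (x + z) ↔ a / x = b / z := by
  rw [ENNReal.div_eq_div_iff (fun h => hx₀ (add_eq_zero.mp h).1) (add_ne_top.mpr ⟨hx, hz⟩) hx₀ hx,
    ENNReal.div_eq_div_iff hz₀ hz hx₀ hx, add_mul, mul_add, add_right_inj (mul_ne_top hx ha)]

theorem eq_iff_eq_of_add_eq_one {a b c d : ℝ≥0∞} (hab : a + b = 1) (hcd : c + d = 1) :
    a = c ↔ b = d := by
  have hb : b ≠ ∞ := ne_top_of_le_ne_top one_ne_top (hab ▸ le_add_self)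
  have ha : a ≠ ∞ := ne_top_of_le_ne_top one_ne_top (hab ▸ le_self_add)
  constructor
  · rintro rfl
    exact (add_right_inj ha).mp (hab.trans hcd.symm)
  · rintro rfl
    exact (add_left_inj hb).mp (hab.trans hcd.symm)

end ENNReal

section condProb

variable {Ω : Type*} [MeasurableSpace Ω] {μ : Measure Ω} [IsFiniteMeasure μ] {E F B C : Set Ω}

theorem condProb_inter_eq_mul_iff (hB : μ B ≠ 0) (hBF : μ (B ∩ F) ≠ 0) :
    condProb μ (E ∩ F) B = condProb μ E B * condProb μ F B ↔
      condProb μ E (B ∩ F) = condProb μ E B := by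
  unfold condProb
  rw [Set.inter_comm B F] at hBF ⊢
  rw [← Set.inter_assoc, eq_comm, @eq_comm _ (_ / μ (F ∩ B)),
    ENNReal.eq_div_iff hB (measure_ne_top _ _), ENNReal.eq_div_iff hBF (measure_ne_top _ _),
    mul_left_comm, ENNReal.mul_div_cancel hB (measure_ne_top _ _), mul_comm (μ (E ∩ B) / μ B)]

theorem condProb_add_condProb_compl (hE : MeasurableSet E) (hB : μ B ≠ 0) :
    condProb μ E B + condProb μ Eᶜ B = 1 := by
  rw [condProb, condProb, ENNReal.div_add_div_same, Set.inter_comm, Set.inter_comm Eᶜ,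
    ← Set.sdiff_eq, measure_inter_add_sdiff _ hE, ENNReal.div_self hB (measure_ne_top _ _)]

theorem condProb_compl_eq_iff (hE : MeasurableSet E) (hB : μ B ≠ 0) (hC : μ C ≠ 0) :
    condProb μ Eᶜ B = condProb μ Eᶜ C ↔ condProb μ E B = condProb μ E C :=
  (ENNReal.eq_iff_eq_of_add_eq_one (condProb_add_condProb_compl hE hB)
    (condProb_add_condProb_compl hE hC)).symm

theorem condProb_inter_eq_iff (hC : MeasurableSet C) (hBC : μ (B ∩ C) ≠ 0)
    (hBC' : μ (B \ C) ≠ 0) :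
    condProb μ E (B ∩ C) = condProb μ E B ↔ condProb μ E (B ∩ C) = condProb μ E (B \ C) := by
  unfold condProb
  rw [← measure_inter_add_sdiff B hC, ← measure_inter_add_sdiff (E ∩ B) hC,
    Set.inter_assoc, Set.inter_sdiff_assoc]
  exact ENNReal.div_eq_add_div_add_iff (measure_ne_top _ _) hBC (measure_ne_top _ _) hBC'
    (measure_ne_top _ _)

theorem condIndepDiscrete_iff_forall_condProb_eq {α β γ : Type*} {X : Ω → α} {Y : Ω → β}
    {Z : Ω → γ} (h : ∀ z y, μ {ω | Z ω = z ∧ Y ω = y} ≠ 0) :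
    CondIndepDiscrete μ X Y Z ↔ ∀ x y z,
      condProb μ {ω | X ω = x} {ω | Z ω = z ∧ Y ω = y} =
        condProb μ {ω | X ω = x} {ω | Z ω = z} := by
  refine forall_congr' fun x => forall_congr' fun y => forall_congr' fun z => ?_
  have hZ : μ {ω | Z ω = z} ≠ 0 := fun h0 => h z y (measure_mono_null (fun _ hω => hω.1) h0)
  rw [imp_iff_right hZ, Set.ofPred_and, Set.ofPred_and]
  exact condProb_inter_eq_mul_iff hZ (Set.ofPred_and ▸ h z y)

theorem forall_condProb_inter_eq_iff {A : Ω → Bool} (hA : Measurable A)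
    (h : ∀ a, μ (B ∩ {ω | A ω = a}) ≠ 0) :
    (∀ a, condProb μ E (B ∩ {ω | A ω = a}) = condProb μ E B) ↔
      condProb μ E (B ∩ {ω | A ω = true}) = condProb μ E (B ∩ {ω | A ω = false}) := by
  have hfalse : B ∩ {ω | A ω = false} = B \ {ω | A ω = true} := by ext; simp
  have key := condProb_inter_eq_iff (E := E) (hA (measurableSet_singleton true)) (h true)
    (hfalse ▸ h false)
  rw [Bool.forall_bool, hfalse]
  exact ⟨fun ⟨hf, ht⟩ => ht.trans hf.symm, fun heq => ⟨heq.symm.trans (key.mpr heq), key.mpr heq⟩⟩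

theorem forall_condProb_eq_iff_of_bool {Y : Ω → Bool} (hY : Measurable Y) (hB : μ B ≠ 0)
    (hC : μ C ≠ 0) (b : Bool) :
    (∀ y, condProb μ {ω | Y ω = y} B = condProb μ {ω | Y ω = y} C) ↔
      condProb μ {ω | Y ω = b} B = condProb μ {ω | Y ω = b} C := by
  have hcompl : {ω | Y ω = !b} = {ω | Y ω = b}ᶜ := by ext; cases b <;> simp
  have hmeas : MeasurableSet {ω | Y ω = b} := hY (measurableSet_singleton b)
  rw [Bool.forall_bool' b, hcompl, condProb_compl_eq_iff hmeas hB hC, and_self]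

end condProb

-- `+` and `p` are encoded as `true`, `−` and `q` as `false`.
theorem sufficiency_iff_equal_ppv_and_npv_general
    {Ω : Type*} [MeasurableSpace Ω] (μ : Measure Ω) [IsProbabilityMeasure μ]
    (Y R A : Ω → Bool) (hY : Measurable Y) (hA : Measurable A)
    (hpos : ∀ (r a : Bool), 0 < μ {ω | R ω = r ∧ A ω = a}) :
    CondIndepDiscrete μ Y A R ↔
      (condProb μ {ω | Y ω = true} {ω | R ω = true ∧ A ω = true} =
          condProb μ {ω | Y ω = true} {ω | R ω = true ∧ A ω = false}) ∧
      (condProb μ {ω | Y ω = false} {ω | R ω = false ∧ A ω = true} =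
          condProb μ {ω | Y ω = false} {ω | R ω = false ∧ A ω = false}) := by
  have hpos' (r a : Bool) : μ ({ω | R ω = r} ∩ {ω | A ω = a}) ≠ 0 :=
    Set.ofPred_and ▸ (hpos r a).ne'
  rw [condIndepDiscrete_iff_forall_condProb_eq fun r a => (hpos r a).ne']
  simp only [Set.ofPred_and]
  calc
    _ ↔ ∀ y r, condProb μ {ω | Y ω = y} ({ω | R ω = r} ∩ {ω | A ω = true}) =
          condProb μ {ω | Y ω = y} ({ω | R ω = r} ∩ {ω | A ω = false}) :=
      forall_congr' fun y => forall_comm.trans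
        (forall_congr' fun r => forall_condProb_inter_eq_iff hA (hpos' r))
    _ ↔ ∀ r, condProb μ {ω | Y ω = r} ({ω | R ω = r} ∩ {ω | A ω = true}) =
          condProb μ {ω | Y ω = r} ({ω | R ω = r} ∩ {ω | A ω = false}) :=
      forall_comm.trans (forall_congr' fun r =>
        forall_condProb_eq_iff_of_bool hY (hpos' r true) (hpos' r false) r)
    _ ↔ _ := by rw [Bool.forall_bool, and_comm]

/-- For binary `Y`, `R`, `A` (with `+ := true`, `− := false`, `p := true`, `q := false`)
such that `P(R = r, A = a) > 0` for every pair, sufficiency (`Y ⊥ A ∣ R`) holds iff both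
groups have the same positive predictive value `P(Y = + | R = +, A = a)` and the same
negative predictive value `P(Y = − | R = −, A = a)`. -/
theorem sufficiency_iff_equal_ppv_and_npv
    {Ω : Type*} [MeasurableSpace Ω] (μ : Measure Ω) [IsProbabilityMeasure μ]
    (Y R A : Ω → Bool) (hY : Measurable Y) (hR : Measurable R) (hA : Measurable A)
    (hpos : ∀ (r a : Bool), 0 < μ {ω | R ω = r ∧ A ω = a}) :
    CondIndepDiscrete μ Y A R ↔
      (condProb μ {ω | Y ω = true} {ω | R ω = true ∧ A ω = true} =
          condProb μ {ω | Y ω = true} {ω | R ω = true ∧ A ω = false}) ∧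
      (condProb μ {ω | Y ω = false} {ω | R ω = false ∧ A ω = true} =
          condProb μ {ω | Y ω = false} {ω | R ω = false ∧ A ω = false}) :=
  sufficiency_iff_equal_ppv_and_npv_general μ Y R A hY hA hpos
end

section
/- For binary random variables Y, R, A such that P(Y = y, A = a) > 0 for every pair (y, a), separation (R conditionally independent of A given Y) holds if and only if both groups have the same false positive rate, P(R = + | Y = −, A = p) = P(R = + | Y = −, A = q), and the same false negative rate, P(R = − | Y = +, A = p) = P(R = − | Y = +, A = q). -/
open MeasureTheory ENNReal

/-! Under `μ[|Y = y]`, separation says that `R` and `A` are independent. Since `A` is binary,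
`P(R = r | Y = y)` is an average, with positive weights, of `P(R = r | Y = y, A = p)` and
`P(R = r | Y = y, A = q)`, so the product rule for `R = r` holds iff these two agree; and since
`R` is binary, they agree for `R = +` iff they agree for `R = −`. At `y = −` this is the false
positive rate, at `y = +` the false negative rate. -/

open ProbabilityTheory Set

section Conditioning

variable {Ω : Type*} [MeasurableSpace Ω] {μ : Measure Ω} {s t u : Set Ω}

lemma condProb_eq_cond (ht : MeasurableSet t) (μ : Measure Ω) (s : Set Ω) :
    condProb μ s t = μ[s | t] := by
  rw [condProb, cond_apply ht, inter_comm, ENNReal.div_eq_inv_mul]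

lemma measure_inter_eq_mul_iff_cond_eq [IsFiniteMeasure μ] (ht : MeasurableSet t)
    (ht0 : μ t ≠ 0) : μ (s ∩ t) = μ s * μ t ↔ μ[s | t] = μ s := by
  rw [inter_comm, ← cond_mul_eq_inter ht, ENNReal.mul_left_inj ht0 (measure_ne_top μ t)]

lemma cond_eq_self_iff_cond_eq_cond_compl [IsProbabilityMeasure μ] (ht : MeasurableSet t)
    (htc0 : μ tᶜ ≠ 0) : μ[s | t] = μ s ↔ μ[s | t] = μ[s | tᶜ] := by
  have total : μ[s | t] * μ t + μ[s | tᶜ] * μ tᶜ = μ s := cond_add_cond_compl_eq ht μ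
  have split : μ[s | t] * μ t + μ[s | t] * μ tᶜ = μ[s | t] := by
    rw [← mul_add, measure_add_measure_compl ht, measure_univ, mul_one]
  calc μ[s | t] = μ s
        ↔ μ[s | t] * μ t + μ[s | t] * μ tᶜ = μ[s | t] * μ t + μ[s | tᶜ] * μ tᶜ := by
          rw [split, total]
    _ ↔ μ[s | t] * μ tᶜ = μ[s | tᶜ] * μ tᶜ :=
          ENNReal.add_right_inj (ENNReal.mul_ne_top (measure_ne_top _ _) (measure_ne_top μ t))
    _ ↔ μ[s | t] = μ[s | tᶜ] := ENNReal.mul_left_inj htc0 (measure_ne_top μ tᶜ)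

lemma cond_compl_eq_cond_compl_iff [IsFiniteMeasure μ] (hs : MeasurableSet s)
    (ht0 : μ t ≠ 0) (hu0 : μ u ≠ 0) : μ[sᶜ | t] = μ[sᶜ | u] ↔ μ[s | t] = μ[s | u] := by
  have := cond_isProbabilityMeasure ht0
  have := cond_isProbabilityMeasure hu0
  rw [prob_compl_eq_one_sub hs, prob_compl_eq_one_sub hs,
    ENNReal.sub_right_inj ENNReal.one_ne_top prob_le_one prob_le_one]

lemma measurableSet_setOf_eq {γ : Type*} [MeasurableSpace γ] [MeasurableSingletonClass γ]
    {Z : Ω → γ} (hZ : Measurable Z) (z : γ) : MeasurableSet {ω | Z ω = z} :=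
  (measurableSet_singleton z).preimage hZ

lemma condIndepDiscrete_iff_forall_cond {α β γ : Type*} [MeasurableSpace γ]
    [MeasurableSingletonClass γ] {X : Ω → α} {Y : Ω → β} {Z : Ω → γ} (hZ : Measurable Z)
    (hZ0 : ∀ z, μ {ω | Z ω = z} ≠ 0) :
    CondIndepDiscrete μ X Y Z ↔ ∀ z x y, μ[{ω | X ω = x} ∩ {ω | Y ω = y} | {ω | Z ω = z}] =
      μ[{ω | X ω = x} | {ω | Z ω = z}] * μ[{ω | Y ω = y} | {ω | Z ω = z}] := by
  simp only [CondIndepDiscrete, hZ0, ne_eq, not_false_eq_true, forall_const,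
    condProb_eq_cond (measurableSet_setOf_eq hZ _)]
  exact ⟨fun h z x y => h x y z, fun h x y z => h z x y⟩

end Conditioning

section Binary

variable {Ω : Type*} [MeasurableSpace Ω] {μ : Measure Ω} {R A : Ω → Bool}

omit [MeasurableSpace Ω] in
lemma setOf_eq_not (f : Ω → Bool) (b : Bool) : {ω | f ω = !b} = {ω | f ω = b}ᶜ := by
  ext ω
  cases b <;> simp

lemma forall_measure_inter_eq_mul_iff_cond_eq [IsProbabilityMeasure μ] (hR : Measurable R)
    (hA : Measurable A) (hA0 : ∀ a, μ {ω | A ω = a} ≠ 0) (r₀ : Bool) :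
    (∀ r a, μ ({ω | R ω = r} ∩ {ω | A ω = a}) = μ {ω | R ω = r} * μ {ω | A ω = a}) ↔
      μ[{ω | R ω = r₀} | {ω | A ω = true}] = μ[{ω | R ω = r₀} | {ω | A ω = false}] := by
  have hcompl : ∀ a, {ω | A ω = a}ᶜ = {ω | A ω = !a} := fun a => (setOf_eq_not A a).symm
  have hsplit : ∀ r, (∀ a, μ ({ω | R ω = r} ∩ {ω | A ω = a}) =
      μ {ω | R ω = r} * μ {ω | A ω = a}) ↔
      μ[{ω | R ω = r} | {ω | A ω = true}] = μ[{ω | R ω = r} | {ω | A ω = false}] := by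
    intro r
    simp only [measure_inter_eq_mul_iff_cond_eq (measurableSet_setOf_eq hA _) (hA0 _),
      Bool.forall_bool, cond_eq_self_iff_cond_eq_cond_compl (measurableSet_setOf_eq hA _)
      (hcompl _ ▸ hA0 _), hcompl, Bool.not_true, Bool.not_false]
    exact ⟨And.right, fun h => ⟨h.symm, h⟩⟩
  have hnot : ∀ r, (μ[{ω | R ω = !r} | {ω | A ω = true}] =
      μ[{ω | R ω = !r} | {ω | A ω = false}] ↔
      μ[{ω | R ω = r} | {ω | A ω = true}] = μ[{ω | R ω = r} | {ω | A ω = false}]) := by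
    intro r
    rw [setOf_eq_not]
    exact cond_compl_eq_cond_compl_iff (measurableSet_setOf_eq hR r) (hA0 _) (hA0 _)
  simp only [hsplit]
  refine ⟨fun h => h r₀, fun h r => ?_⟩
  rcases Bool.eq_or_eq_not r r₀ with rfl | rfl
  exacts [h, (hnot r₀).2 h]

lemma forall_cond_inter_eq_mul_iff_cond_eq [IsFiniteMeasure μ] {e : Set Ω}
    (he : MeasurableSet e) (hR : Measurable R) (hA : Measurable A)
    (hpos : ∀ a, μ (e ∩ {ω | A ω = a}) ≠ 0) (r₀ : Bool) :
    (∀ r a, μ[{ω | R ω = r} ∩ {ω | A ω = a} | e] =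
        μ[{ω | R ω = r} | e] * μ[{ω | A ω = a} | e]) ↔
      μ[{ω | R ω = r₀} | e ∩ {ω | A ω = true}] = μ[{ω | R ω = r₀} | e ∩ {ω | A ω = false}] := by
  have he0 : μ e ≠ 0 := fun h => hpos true (measure_mono_null inter_subset_left h)
  have := cond_isProbabilityMeasure he0
  rw [forall_measure_inter_eq_mul_iff_cond_eq hR hA
      (fun a => (cond_pos_of_inter_ne_zero he (hpos a)).ne') r₀,
    cond_cond_eq_cond_inter he (measurableSet_setOf_eq hA _),
    cond_cond_eq_cond_inter he (measurableSet_setOf_eq hA _)]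

end Binary

/-- Encoding: `+ := true`, `− := false`, `p := true`, `q := false`. -/
theorem separation_iff_equal_fpr_and_fnr
    {Ω : Type*} [MeasurableSpace Ω] (μ : Measure Ω) [IsProbabilityMeasure μ]
    (Y R A : Ω → Bool) (hY : Measurable Y) (hR : Measurable R) (hA : Measurable A)
    (hpos : ∀ (y a : Bool), 0 < μ {ω | Y ω = y ∧ A ω = a}) :
    CondIndepDiscrete μ R A Y ↔
      (condProb μ {ω | R ω = true} {ω | Y ω = false ∧ A ω = true} =
          condProb μ {ω | R ω = true} {ω | Y ω = false ∧ A ω = false}) ∧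
      (condProb μ {ω | R ω = false} {ω | Y ω = true ∧ A ω = true} =
          condProb μ {ω | R ω = false} {ω | Y ω = true ∧ A ω = false}) := by
  have hY0 : ∀ y, μ {ω | Y ω = y} ≠ 0 :=
    fun y => ((hpos y true).trans_le (measure_mono fun _ h => h.1)).ne'
  rw [condIndepDiscrete_iff_forall_cond hY hY0, Bool.forall_bool,
    forall_cond_inter_eq_mul_iff_cond_eq (measurableSet_setOf_eq hY false) hR hA
      (fun a => (hpos false a).ne') true,
    forall_cond_inter_eq_mul_iff_cond_eq (measurableSet_setOf_eq hY true) hR hA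
      (fun a => (hpos true a).ne') false]
  simp only [ofPred_and,
    condProb_eq_cond ((measurableSet_setOf_eq hY _).inter (measurableSet_setOf_eq hA _))]
end

section
/- Sufficiency and separation are not incrementally conservative: there exist two joint probability distributions P and P' of binary random variables (A, Y, R) with identical marginal distribution of (A, Y), such that in each group the accuracy under P' is strictly greater than under P (P'(R = Y | A = a) > P(R = Y | A = a) for both values a of A), P satisfies both sufficiency and separation, yet P' satisfies neither sufficiency nor separation. A witness is given by group counts (true positives, false positives, false negatives, true negatives) of (10, 2, 3, 11) for group p and (20, 4, 6, 22) for group q under P, changed to (11, 2, 2, 11) and (21, 4, 5, 22) under P'. -/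
open MeasureTheory ENNReal

/-- Sample points are triples `(a, y, r)`: group membership `A`, true label `Y`,
prediction `R` (group `p := true`, positive `:= true`). -/
def Agrp (x : Bool × Bool × Bool) : Bool := x.1
def Ylbl (x : Bool × Bool × Bool) : Bool := x.2.1
def Rprd (x : Bool × Bool × Bool) : Bool := x.2.2

/-- The joint distribution `P` given by group counts (TP, FP, FN, TN) equal to
`(10, 2, 3, 11)` for group `p` and `(20, 4, 6, 22)` for group `q` (total count `78`). -/
noncomputable def muP : Measure (Bool × Bool × Bool) :=
  (10 / 78 : ℝ≥0∞) • Measure.dirac (true, true, true) +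
  (2 / 78 : ℝ≥0∞) • Measure.dirac (true, false, true) +
  (3 / 78 : ℝ≥0∞) • Measure.dirac (true, true, false) +
  (11 / 78 : ℝ≥0∞) • Measure.dirac (true, false, false) +
  (20 / 78 : ℝ≥0∞) • Measure.dirac (false, true, true) +
  (4 / 78 : ℝ≥0∞) • Measure.dirac (false, false, true) +
  (6 / 78 : ℝ≥0∞) • Measure.dirac (false, true, false) +
  (22 / 78 : ℝ≥0∞) • Measure.dirac (false, false, false)

/-- The more accurate joint distribution `P'` given by group counts (TP, FP, FN, TN)
equal to `(11, 2, 2, 11)` for group `p` and `(21, 4, 5, 22)` for group `q`. -/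
noncomputable def muP' : Measure (Bool × Bool × Bool) :=
  (11 / 78 : ℝ≥0∞) • Measure.dirac (true, true, true) +
  (2 / 78 : ℝ≥0∞) • Measure.dirac (true, false, true) +
  (2 / 78 : ℝ≥0∞) • Measure.dirac (true, true, false) +
  (11 / 78 : ℝ≥0∞) • Measure.dirac (true, false, false) +
  (21 / 78 : ℝ≥0∞) • Measure.dirac (false, true, true) +
  (4 / 78 : ℝ≥0∞) • Measure.dirac (false, false, true) +
  (5 / 78 : ℝ≥0∞) • Measure.dirac (false, true, false) +
  (22 / 78 : ℝ≥0∞) • Measure.dirac (false, false, false)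

/-!
Under `P` the counts of group `q` are exactly twice those of group `p`, so `A` is independent of
`(Y, R)` and both conditional independences hold. `P'` moves one false negative of each group to a
true positive, which raises both accuracies but breaks the proportionality:
`P'(A = p | R = Y = true) = 11/32`, while `P'(A = p | R = true) = 13/38` and
`P'(A = p | Y = true) = 13/39`.

For a distribution given by counts every conditional probability is a ratio of integers, and
conditional independence given `Z = z` becomes the integer identity
`n(x, y, z) n(z) = n(x, z) n(y, z)`, which is checked by evaluation.
-/

theorem ENNReal.div_eq_div_mul_div_iff {a b c d : ℝ≥0∞} (hc : c ≠ 0) (hc' : c ≠ ∞) :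
    a / c = b / c * (d / c) ↔ a * c = b * d := by
  rw [← ENNReal.mul_div_mul_comm (.inl hc) (.inl hc'), ENNReal.div_eq_div_iff (mul_ne_zero hc hc)
    (ENNReal.mul_ne_top hc' hc') hc hc', mul_assoc, ENNReal.mul_right_inj hc hc', mul_comm]

section condProb

variable {Ω α β γ : Type*} [MeasurableSpace Ω] {μ : Measure Ω}

theorem condProb_smul {c : ℝ≥0∞} (hc : c ≠ 0) (hc' : c ≠ ∞) (s t : Set Ω) :
    condProb (c • μ) s t = condProb μ s t :=
  ENNReal.mul_div_mul_left _ _ hc hc'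

theorem condIndepDiscrete_smul_iff {c : ℝ≥0∞} (hc : c ≠ 0) (hc' : c ≠ ∞)
    (X : Ω → α) (Y : Ω → β) (Z : Ω → γ) :
    CondIndepDiscrete (c • μ) X Y Z ↔ CondIndepDiscrete μ X Y Z := by
  simp only [CondIndepDiscrete, condProb_smul hc hc', Measure.smul_apply, smul_eq_mul,
    mul_ne_zero_iff, ne_eq, hc, not_false_eq_true, true_and]

theorem condIndepDiscrete_iff_mul_eq [IsFiniteMeasure μ] (X : Ω → α) (Y : Ω → β) (Z : Ω → γ) :
    CondIndepDiscrete μ X Y Z ↔ ∀ x y z, μ {ω | Z ω = z} ≠ 0 →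
      μ ({ω | X ω = x ∧ Y ω = y} ∩ {ω | Z ω = z}) * μ {ω | Z ω = z} =
        μ ({ω | X ω = x} ∩ {ω | Z ω = z}) * μ ({ω | Y ω = y} ∩ {ω | Z ω = z}) := by
  refine forall₃_congr fun x y z => forall_congr' fun hz => ?_
  exact ENNReal.div_eq_div_mul_div_iff hz (measure_ne_top μ _)

end condProb

section countMeasure

variable {α : Type*} [Fintype α] [MeasurableSpace α] [MeasurableSingletonClass α]

noncomputable def countMeasure (n : α → ℕ) : Measure α := ∑ x, (n x : ℝ≥0∞) • Measure.dirac x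

noncomputable def countDistribution (n : α → ℕ) : Measure α :=
  ((∑ x, n x : ℕ) : ℝ≥0∞)⁻¹ • countMeasure n

theorem countMeasure_apply (n : α → ℕ) (s : Set α) [DecidablePred (· ∈ s)] :
    countMeasure n s = ↑(∑ x with x ∈ s, n x) := by
  simp [countMeasure, Measure.dirac_apply, Set.indicator_apply, Finset.sum_filter]

instance (n : α → ℕ) : IsFiniteMeasure (countMeasure n) :=
  ⟨by classical simp [countMeasure_apply]⟩

theorem isProbabilityMeasure_countDistribution {n : α → ℕ} (hn : ∑ x, n x ≠ 0) :
    IsProbabilityMeasure (countDistribution n) := by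
  classical
  constructor
  rw [countDistribution, Measure.smul_apply, countMeasure_apply, smul_eq_mul]
  simp only [Set.mem_univ, Finset.filter_true]
  exact ENNReal.inv_mul_cancel (by exact_mod_cast hn) (ENNReal.natCast_ne_top _)

theorem countDistribution_apply_eq {n m : α → ℕ} (hnm : ∑ x, n x = ∑ x, m x) {s : Set α}
    [DecidablePred (· ∈ s)] (hs : ∑ x with x ∈ s, n x = ∑ x with x ∈ s, m x) :
    countDistribution n s = countDistribution m s := by
  rw [countDistribution, countDistribution, Measure.smul_apply, Measure.smul_apply,
    countMeasure_apply, countMeasure_apply, hnm, hs]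

theorem condProb_countDistribution_lt {n m : α → ℕ} (hn : ∑ x, n x ≠ 0) (hm : ∑ x, m x ≠ 0)
    {s t : Set α} [DecidablePred (· ∈ s)] [DecidablePred (· ∈ t)]
    (ht : ∑ x with x ∈ t, n x = ∑ x with x ∈ t, m x) (ht0 : ∑ x with x ∈ t, n x ≠ 0)
    (hst : ∑ x with x ∈ s ∩ t, n x < ∑ x with x ∈ s ∩ t, m x) :
    condProb (countDistribution n) s t < condProb (countDistribution m) s t := by
  rw [countDistribution, countDistribution, condProb_smul (by simp) (by simpa using hn),
    condProb_smul (by simp) (by simpa using hm), condProb, condProb,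
    countMeasure_apply, countMeasure_apply, countMeasure_apply, countMeasure_apply, ← ht]
  exact ENNReal.div_lt_div_right (by exact_mod_cast ht0) (ENNReal.natCast_ne_top _)
    (by exact_mod_cast hst)

theorem condIndepDiscrete_countDistribution_iff {β γ δ : Type*} [DecidableEq β] [DecidableEq γ]
    [DecidableEq δ] {n : α → ℕ} (hn : ∑ x, n x ≠ 0) (X : α → β) (Y : α → γ) (Z : α → δ) :
    CondIndepDiscrete (countDistribution n) X Y Z ↔ ∀ x y z, ∑ ω with Z ω = z, n ω ≠ 0 →
      (∑ ω with X ω = x ∧ Y ω = y ∧ Z ω = z, n ω) * ∑ ω with Z ω = z, n ω =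
        (∑ ω with X ω = x ∧ Z ω = z, n ω) * ∑ ω with Y ω = y ∧ Z ω = z, n ω := by
  rw [countDistribution, condIndepDiscrete_smul_iff (by simp) (by simpa using hn),
    condIndepDiscrete_iff_mul_eq]
  simp only [countMeasure_apply, Set.mem_inter_iff, Set.mem_ofPred_eq, and_assoc, ← Nat.cast_mul,
    Nat.cast_inj, ne_eq, Nat.cast_eq_zero]

end countMeasure

/-- `c = (TP, FP, FN, TN)`, read off at label `y` and prediction `r`. -/
def confusionCount (c : ℕ × ℕ × ℕ × ℕ) : Bool → Bool → ℕ
  | true, true => c.1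
  | false, true => c.2.1
  | true, false => c.2.2.1
  | false, false => c.2.2.2

def groupCounts (p q : ℕ × ℕ × ℕ × ℕ) (x : Bool × Bool × Bool) : ℕ :=
  confusionCount (if x.1 then p else q) x.2.1 x.2.2

theorem muP_eq : muP = countDistribution (groupCounts (10, 2, 3, 11) (20, 4, 6, 22)) := by
  simp only [muP, countDistribution, countMeasure, Fintype.sum_prod_type, Fintype.sum_bool,
    smul_add, smul_smul, groupCounts, confusionCount, Bool.false_eq_true, if_true, if_false,
    Nat.cast_ofNat, ENNReal.div_eq_inv_mul]
  norm_num
  abel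

theorem muP'_eq : muP' = countDistribution (groupCounts (11, 2, 2, 11) (21, 4, 5, 22)) := by
  simp only [muP', countDistribution, countMeasure, Fintype.sum_prod_type, Fintype.sum_bool,
    smul_add, smul_smul, groupCounts, confusionCount, Bool.false_eq_true, if_true, if_false,
    Nat.cast_ofNat, ENNReal.div_eq_inv_mul]
  norm_num
  abel

/-- Sufficiency and separation are not incrementally conservative: `P := muP` and
`P' := muP'` are probability distributions of binary `(A, Y, R)` with identical marginal
distribution of `(A, Y)`, in each group the accuracy `P'(R = Y | A = a)` strictly exceeds
`P(R = Y | A = a)`, `P` satisfies both sufficiency (`Y ⊥ A ∣ R`) and separation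
(`R ⊥ A ∣ Y`), yet `P'` satisfies neither.  In particular such a pair of joint
distributions exists. -/
theorem sufficiency_and_separation_not_incrementally_conservative :
    IsProbabilityMeasure muP ∧ IsProbabilityMeasure muP' ∧
    (∀ (a y : Bool), muP {x | Agrp x = a ∧ Ylbl x = y} = muP' {x | Agrp x = a ∧ Ylbl x = y}) ∧
    (∀ a : Bool, condProb muP {x | Rprd x = Ylbl x} {x | Agrp x = a} <
        condProb muP' {x | Rprd x = Ylbl x} {x | Agrp x = a}) ∧
    CondIndepDiscrete muP Ylbl Agrp Rprd ∧
    CondIndepDiscrete muP Rprd Agrp Ylbl ∧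
    ¬ CondIndepDiscrete muP' Ylbl Agrp Rprd ∧
    ¬ CondIndepDiscrete muP' Rprd Agrp Ylbl := by
  set n := groupCounts (10, 2, 3, 11) (20, 4, 6, 22)
  set m := groupCounts (11, 2, 2, 11) (21, 4, 5, 22)
  have hn : ∑ x, n x ≠ 0 := by decide
  have hm : ∑ x, m x ≠ 0 := by decide
  rw [muP_eq, muP'_eq, condIndepDiscrete_countDistribution_iff hn,
    condIndepDiscrete_countDistribution_iff hn, condIndepDiscrete_countDistribution_iff hm,
    condIndepDiscrete_countDistribution_iff hm]
  refine ⟨isProbabilityMeasure_countDistribution hn, isProbabilityMeasure_countDistribution hm,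
    fun a y => countDistribution_apply_eq (by decide) (by revert a y; decide),
    fun a => condProb_countDistribution_lt hn hm (by revert a; decide) (by revert a; decide)
      (by revert a; decide), by decide, by decide, by decide, by decide⟩
end
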